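/- arXiv:1609.06212 — 2 statements merged into one kernel-verified Lean document; each statement's English description precedes it below -/
import Mathlib

section
/- Let G(y) = (1/2)·exp(−|y|). Let ρ > 0 and, for j = 1, 2, let ξⱼ : ℝ → ℝ be Lipschitz such that ρ ≤ 1 + ξⱼ′(σ) for almost every σ ∈ ℝ; set xⱼ(s) = s + ξⱼ(s). Then for all s, σ ∈ ℝ: |G(x₁(s) − x₁(σ)) − G(x₂(s) − x₂(σ))| ≤ G(ρ·(s − σ))·(|ξ₁(s) − ξ₂(s)| + |ξ₁(σ) − ξ₂(σ)|), and for s ≠ σ also |G′(x₁(s) − x₁(σ)) − G′(x₂(s) − x₂(σ))| ≤ G(ρ·(s − σ))·(|ξ₁(s) − ξ₂(s)| + |ξ₁(σ) − ξ₂(σ)|), where G′(y) = −(1/2)·sgn(y)·exp(−|y|). -/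
/-!
Since `1 + ξⱼ' ≥ ρ` almost everywhere and `ξⱼ` is Lipschitz, hence absolutely continuous, the
fundamental theorem of calculus makes each `xⱼ` expanding: `ρ (s - σ) ≤ xⱼ s - xⱼ σ` for
`σ ≤ s`. So `xⱼ s - xⱼ σ` has the sign of `s - σ` and modulus at least `ρ |s - σ|`; on
`[r, ∞)` the map `u ↦ exp (-u)` is `exp (-r)`-Lipschitz, and the difference of the two arguments
is `(ξ₁ s - ξ₂ s) - (ξ₁ σ - ξ₂ σ)`.
-/

open MeasureTheory Real

theorem AbsolutelyContinuousOnInterval.mul_sub_le_sub_of_ae_le_deriv {f : ℝ → ℝ} {a b c : ℝ}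
    (hf : AbsolutelyContinuousOnInterval f a b) (hc : ∀ᵐ x, c ≤ deriv f x) (hab : a ≤ b) :
    c * (b - a) ≤ f b - f a := by
  rw [← hf.integral_deriv_eq_sub]
  calc c * (b - a) = ∫ _ in a..b, c := by simp [mul_comm]
    _ ≤ ∫ x in a..b, deriv f x :=
      intervalIntegral.integral_mono_ae hab intervalIntegrable_const hf.intervalIntegrable_deriv hc

theorem LipschitzWith.mul_sub_le_add_sub_add {ξ ξ' : ℝ → ℝ} {K : NNReal} {ρ σ s : ℝ}
    (hξ : LipschitzWith K ξ) (hderiv : ∀ᵐ x, HasDerivAt ξ (ξ' x) x)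
    (hlow : ∀ᵐ x, ρ ≤ 1 + ξ' x) (hσs : σ ≤ s) :
    ρ * (s - σ) ≤ (s + ξ s) - (σ + ξ σ) := by
  have hderiv_le : ∀ᵐ x, ρ - 1 ≤ deriv ξ x := by
    filter_upwards [hderiv, hlow] with x hx hρx
    rw [hx.deriv]
    linarith
  have := (hξ.lipschitzOnWith (s := Set.uIcc σ s)).absolutelyContinuousOnInterval
    |>.mul_sub_le_sub_of_ae_le_deriv hderiv_le hσs
  linarith

theorem mul_abs_sub_le_abs_sub {f : ℝ → ℝ} {ρ : ℝ}
    (hf : ∀ σ s, σ ≤ s → ρ * (s - σ) ≤ f s - f σ) (s σ : ℝ) :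
    ρ * |s - σ| ≤ |f s - f σ| := by
  rcases le_total σ s with h | h
  · rw [abs_of_nonneg (sub_nonneg.2 h)]
    exact (hf σ s h).trans (le_abs_self _)
  · rw [abs_sub_comm, abs_of_nonneg (sub_nonneg.2 h), abs_sub_comm]
    exact (hf s σ h).trans (le_abs_self _)

theorem strictMono_of_mul_sub_le_sub {f : ℝ → ℝ} {ρ : ℝ} (hρ : 0 < ρ)
    (hf : ∀ σ s, σ ≤ s → ρ * (s - σ) ≤ f s - f σ) : StrictMono f := fun σ s h => by
  have := hf σ s h.le
  nlinarith

theorem StrictMono.sign_sub {f : ℝ → ℝ} (hf : StrictMono f) (s σ : ℝ) :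
    Real.sign (f s - f σ) = Real.sign (s - σ) := by
  rcases lt_trichotomy s σ with h | rfl | h
  · rw [sign_of_neg (sub_neg.2 (hf h)), sign_of_neg (sub_neg.2 h)]
  · simp
  · rw [sign_of_pos (sub_pos.2 (hf h)), sign_of_pos (sub_pos.2 h)]

namespace Real

theorem abs_sign_le_one (r : ℝ) : |sign r| ≤ 1 := by
  rcases sign_apply_eq r with h | h | h <;> simp [h]

theorem exp_neg_sub_exp_neg_le {r u v : ℝ} (hru : r ≤ u) (huv : u ≤ v) :
    exp (-u) - exp (-v) ≤ exp (-r) * (v - u) :=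
  calc exp (-u) - exp (-v) = exp (-u) * (1 - exp (-(v - u))) := by
        rw [mul_sub, ← exp_add]; ring_nf
    _ ≤ exp (-u) * (v - u) :=
        mul_le_mul_of_nonneg_left (by linarith [one_sub_le_exp_neg (v - u)]) (exp_pos _).le
    _ ≤ exp (-r) * (v - u) := by gcongr

theorem abs_exp_neg_abs_sub_le {r x y : ℝ} (hx : r ≤ |x|) (hy : r ≤ |y|) :
    |exp (-|x|) - exp (-|y|)| ≤ exp (-r) * |x - y| := by
  refine le_trans ?_ (mul_le_mul_of_nonneg_left (abs_abs_sub_abs_le_abs_sub x y) (exp_pos _).le)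
  rcases le_total |x| |y| with h | h
  · rw [abs_of_nonneg (by simpa using exp_le_exp.2 (neg_le_neg h)),
      abs_sub_comm, abs_of_nonneg (sub_nonneg.2 h)]
    exact exp_neg_sub_exp_neg_le hx h
  · rw [abs_sub_comm, abs_of_nonneg (by simpa using exp_le_exp.2 (neg_le_neg h)),
      abs_of_nonneg (sub_nonneg.2 h)]
    exact exp_neg_sub_exp_neg_le hy h

end Real

theorem stmt_11_general (ρ : ℝ) (hρ : 0 < ρ) (ξ₁ ξ₂ ξ₁' ξ₂' : ℝ → ℝ) (L₁ L₂ : ℝ)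
    (hlip₁ : ∀ a b : ℝ, |ξ₁ a - ξ₁ b| ≤ L₁ * |a - b|)
    (hlip₂ : ∀ a b : ℝ, |ξ₂ a - ξ₂ b| ≤ L₂ * |a - b|)
    (hderiv₁ : ∀ᵐ σ ∂volume, HasDerivAt ξ₁ (ξ₁' σ) σ)
    (hderiv₂ : ∀ᵐ σ ∂volume, HasDerivAt ξ₂ (ξ₂' σ) σ)
    (hlow₁ : ∀ᵐ σ ∂volume, ρ ≤ 1 + ξ₁' σ)
    (hlow₂ : ∀ᵐ σ ∂volume, ρ ≤ 1 + ξ₂' σ)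
    (x₁ x₂ : ℝ → ℝ) (hx₁ : ∀ s, x₁ s = s + ξ₁ s) (hx₂ : ∀ s, x₂ s = s + ξ₂ s)
    (G G' : ℝ → ℝ) (hG : ∀ y, G y = (1 / 2) * Real.exp (-|y|))
    (hG' : ∀ y, G' y = -(1 / 2) * Real.sign y * Real.exp (-|y|)) :
    (∀ s σ : ℝ,
      |G (x₁ s - x₁ σ) - G (x₂ s - x₂ σ)| ≤
        G (ρ * (s - σ)) * (|ξ₁ s - ξ₂ s| + |ξ₁ σ - ξ₂ σ|)) ∧
    (∀ s σ : ℝ, s ≠ σ →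
      |G' (x₁ s - x₁ σ) - G' (x₂ s - x₂ σ)| ≤
        G (ρ * (s - σ)) * (|ξ₁ s - ξ₂ s| + |ξ₁ σ - ξ₂ σ|)) := by
  have hexpand₁ : ∀ σ s, σ ≤ s → ρ * (s - σ) ≤ x₁ s - x₁ σ := fun σ s h => by
    simpa only [hx₁] using (LipschitzWith.of_dist_le' hlip₁).mul_sub_le_add_sub_add hderiv₁ hlow₁ h
  have hexpand₂ : ∀ σ s, σ ≤ s → ρ * (s - σ) ≤ x₂ s - x₂ σ := fun σ s h => by
    simpa only [hx₂] using (LipschitzWith.of_dist_le' hlip₂).mul_sub_le_add_sub_add hderiv₂ hlow₂ h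
  have hkernel : ∀ s σ, |exp (-|x₁ s - x₁ σ|) - exp (-|x₂ s - x₂ σ|)| / 2 ≤
      G (ρ * (s - σ)) * (|ξ₁ s - ξ₂ s| + |ξ₁ σ - ξ₂ σ|) := fun s σ => by
    have hdiff : |(x₁ s - x₁ σ) - (x₂ s - x₂ σ)| ≤ |ξ₁ s - ξ₂ s| + |ξ₁ σ - ξ₂ σ| :=
      calc _ = |(ξ₁ s - ξ₂ s) - (ξ₁ σ - ξ₂ σ)| := by rw [hx₁, hx₁, hx₂, hx₂]; ring_nf
        _ ≤ _ := abs_sub _ _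
    rw [hG, abs_mul, abs_of_pos hρ]
    calc _ ≤ exp (-(ρ * |s - σ|)) * |(x₁ s - x₁ σ) - (x₂ s - x₂ σ)| / 2 := by
          gcongr
          exact abs_exp_neg_abs_sub_le (mul_abs_sub_le_abs_sub hexpand₁ s σ)
            (mul_abs_sub_le_abs_sub hexpand₂ s σ)
      _ ≤ _ := by linarith [mul_le_mul_of_nonneg_left hdiff (exp_pos (-(ρ * |s - σ|))).le]
  refine ⟨fun s σ => ?_, fun s σ _ => ?_⟩
  · rw [hG, hG, ← mul_sub, abs_mul, abs_of_pos one_half_pos]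
    linarith [hkernel s σ]
  · rw [hG', hG', (strictMono_of_mul_sub_le_sub hρ hexpand₁).sign_sub s σ,
      (strictMono_of_mul_sub_le_sub hρ hexpand₂).sign_sub s σ, ← mul_sub, abs_mul, abs_mul,
      abs_neg, abs_of_pos one_half_pos]
    calc _ ≤ 1 / 2 * 1 * |exp (-|x₁ s - x₁ σ|) - exp (-|x₂ s - x₂ σ|)| := by
          gcongr
          exact abs_sign_le_one _
      _ ≤ _ := by linarith [hkernel s σ]

/-- Lipschitz-type estimates for the kernel `G(y) = (1/2)·exp(−|y|)`
and its derivative `G'(y) = −(1/2)·sgn(y)·exp(−|y|)` along two deformations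
`xⱼ(s) = s + ξⱼ(s)`. -/
theorem stmt_11 (ρ : ℝ) (hρ : 0 < ρ) (ξ₁ ξ₂ ξ₁' ξ₂' : ℝ → ℝ) (L₁ L₂ : ℝ)
    (hL₁ : 0 ≤ L₁) (hL₂ : 0 ≤ L₂)
    (hlip₁ : ∀ a b : ℝ, |ξ₁ a - ξ₁ b| ≤ L₁ * |a - b|)
    (hlip₂ : ∀ a b : ℝ, |ξ₂ a - ξ₂ b| ≤ L₂ * |a - b|)
    (hderiv₁ : ∀ᵐ σ ∂volume, HasDerivAt ξ₁ (ξ₁' σ) σ)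
    (hderiv₂ : ∀ᵐ σ ∂volume, HasDerivAt ξ₂ (ξ₂' σ) σ)
    (hlow₁ : ∀ᵐ σ ∂volume, ρ ≤ 1 + ξ₁' σ)
    (hlow₂ : ∀ᵐ σ ∂volume, ρ ≤ 1 + ξ₂' σ)
    (x₁ x₂ : ℝ → ℝ) (hx₁ : ∀ s, x₁ s = s + ξ₁ s) (hx₂ : ∀ s, x₂ s = s + ξ₂ s)
    (G G' : ℝ → ℝ) (hG : ∀ y, G y = (1 / 2) * Real.exp (-|y|))
    (hG' : ∀ y, G' y = -(1 / 2) * Real.sign y * Real.exp (-|y|)) :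
    (∀ s σ : ℝ,
      |G (x₁ s - x₁ σ) - G (x₂ s - x₂ σ)| ≤
        G (ρ * (s - σ)) * (|ξ₁ s - ξ₂ s| + |ξ₁ σ - ξ₂ σ|)) ∧
    (∀ s σ : ℝ, s ≠ σ →
      |G' (x₁ s - x₁ σ) - G' (x₂ s - x₂ σ)| ≤
        G (ρ * (s - σ)) * (|ξ₁ s - ξ₂ s| + |ξ₁ σ - ξ₂ σ|)) :=
  stmt_11_general ρ hρ ξ₁ ξ₂ ξ₁' ξ₂' L₁ L₂ hlip₁ hlip₂ hderiv₁ hderiv₂ hlow₁ hlow₂ x₁ x₂ hx₁ hx₂ G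
    G' hG hG'
end

section
/- Let c₁ > c₂ > 0 and h > 0, and consider the peakon profiles u₁(x) = c₁·exp(−|x − c₁·h|) and u₂(x) = c₂·exp(−|x − c₂·h|). Then sup { |u₁′(x) − u₂′(x)| : x ∈ (c₂·h, c₁·h) } > c₁, where u₁′ and u₂′ denote the derivatives, which exist at every x ∈ (c₂·h, c₁·h). -/
/-!
On `(c₂h, c₁h)` the profile `u₁` sits left of its peak and `u₂` right of its peak, so
`u₁' = u₁` and `u₂' = -u₂` there, and `|u₁' - u₂'| = u₁ + u₂`. This sum is continuous,
at most `c₁ + c₂`, and at the endpoint `c₁h` equals `c₁ + u₂(c₁h) > c₁`; hence it exceeds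
`c₁` at points of the interval close to `c₁h`.
-/

open Filter Set Topology

noncomputable def peakon (c p x : ℝ) : ℝ := c * Real.exp (-|x - p|)

lemma peakon_pos {c : ℝ} (hc : 0 < c) (p x : ℝ) : 0 < peakon c p x := by
  unfold peakon; positivity

lemma peakon_le {c : ℝ} (hc : 0 ≤ c) (p x : ℝ) : peakon c p x ≤ c :=
  mul_le_of_le_one_right hc (Real.exp_le_one_iff.mpr (neg_nonpos.mpr (abs_nonneg _)))

lemma peakon_self (c p : ℝ) : peakon c p p = c := by
  simp [peakon]

lemma continuous_peakon (c p : ℝ) : Continuous (peakon c p) := by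
  unfold peakon; fun_prop

lemma hasDerivAt_peakon_of_lt (c : ℝ) {p x : ℝ} (hx : x < p) :
    HasDerivAt (peakon c p) (peakon c p x) x := by
  have h := ((((hasDerivAt_abs_neg (sub_neg.mpr hx)).comp x
    ((hasDerivAt_id x).sub_const p)).neg).exp).const_mul c
  unfold peakon
  simpa using h

lemma hasDerivAt_peakon_of_gt (c : ℝ) {p x : ℝ} (hx : p < x) :
    HasDerivAt (peakon c p) (-peakon c p x) x := by
  have h := ((((hasDerivAt_abs_pos (sub_pos.mpr hx)).comp x
    ((hasDerivAt_id x).sub_const p)).neg).exp).const_mul c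
  unfold peakon
  simpa using h

lemma lt_csSup_image_Ioo_of_continuousWithinAt {f : ℝ → ℝ} {a b c : ℝ} (hab : a < b)
    (hbdd : BddAbove (f '' Ioo a b)) (hf : ContinuousWithinAt f (Iio b) b) (hc : c < f b) :
    c < sSup (f '' Ioo a b) := by
  obtain ⟨x, hcx, hx⟩ := ((hf.eventually (lt_mem_nhds hc)).and (Ioo_mem_nhdsLT hab)).exists
  exact lt_csSup_of_lt hbdd (mem_image_of_mem f hx) hcx

/-- For the peakon profiles `u₁(x) = c₁·exp(−|x − c₁·h|)` and
`u₂(x) = c₂·exp(−|x − c₂·h|)` with `c₁ > c₂ > 0` and `h > 0`, both are differentiable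
at every `x ∈ (c₂·h, c₁·h)` and the sup of `|u₁' − u₂'|` over that interval
exceeds `c₁`. -/
theorem stmt_18 (c₁ c₂ h : ℝ) (hc₂ : 0 < c₂) (hc : c₂ < c₁) (hh : 0 < h)
    (u₁ u₂ : ℝ → ℝ)
    (hu₁ : ∀ x, u₁ x = c₁ * Real.exp (-|x - c₁ * h|))
    (hu₂ : ∀ x, u₂ x = c₂ * Real.exp (-|x - c₂ * h|)) :
    (∀ x ∈ Set.Ioo (c₂ * h) (c₁ * h),
      DifferentiableAt ℝ u₁ x ∧ DifferentiableAt ℝ u₂ x) ∧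
    c₁ < sSup ((fun x => |deriv u₁ x - deriv u₂ x|) '' Set.Ioo (c₂ * h) (c₁ * h)) := by
  obtain rfl : u₁ = peakon c₁ (c₁ * h) := funext hu₁
  obtain rfl : u₂ = peakon c₂ (c₂ * h) := funext hu₂
  set g := fun x => peakon c₁ (c₁ * h) x + peakon c₂ (c₂ * h) x
  have hd₁ x (hx : x ∈ Ioo (c₂ * h) (c₁ * h)) := hasDerivAt_peakon_of_lt c₁ hx.2
  have hd₂ x (hx : x ∈ Ioo (c₂ * h) (c₁ * h)) := hasDerivAt_peakon_of_gt c₂ hx.1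
  refine ⟨fun x hx => ⟨(hd₁ x hx).differentiableAt, (hd₂ x hx).differentiableAt⟩, ?_⟩
  have himage : (fun x => |deriv (peakon c₁ (c₁ * h)) x - deriv (peakon c₂ (c₂ * h)) x|) ''
      Ioo (c₂ * h) (c₁ * h) = g '' Ioo (c₂ * h) (c₁ * h) := by
    refine image_congr fun x hx => ?_
    rw [(hd₁ x hx).deriv, (hd₂ x hx).deriv, sub_neg_eq_add]
    exact abs_of_pos (add_pos (peakon_pos (hc₂.trans hc) _ _) (peakon_pos hc₂ _ _))
  have hbdd : BddAbove (g '' Ioo (c₂ * h) (c₁ * h)) :=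
    ⟨c₁ + c₂, forall_mem_image.mpr fun x _ =>
      add_le_add (peakon_le (hc₂.trans hc).le _ x) (peakon_le hc₂.le _ x)⟩
  rw [himage]
  refine lt_csSup_image_Ioo_of_continuousWithinAt (by gcongr) hbdd
    ((continuous_peakon _ _).add (continuous_peakon _ _)).continuousWithinAt ?_
  simpa [g, peakon_self] using peakon_pos hc₂ (c₂ * h) (c₁ * h)
end
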